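/- (Buchdahl inequality.) Let (m(r), p(r)) be a regular solution of the TOV system for an equation of state with dρ/dp ≥ 0, and for r in its domain set ℳ(r) = Gm(r)/(c²r) and 𝒫(r) = 4πG r² p(r)/c⁴. Then for every such r, (3ℳ + 𝒫)² ≤ 2(2ℳ + 𝒫). In particular ℳ(r) ≤ 4/9 for all r, and if the solution has finite radius R and finite total mass M then 2GM/(c²R) ≤ 8/9. -/

import Mathlib

open Real Set Filter Topology

/-- The domain `(0, R)` of radii, where `R ∈ (0,∞]`. -/
def tovDomain (R : ENNReal) : Set ℝ := {r : ℝ | 0 < r ∧ ENNReal.ofReal r < R}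

/-- `(m, p)` is a solution of the TOV system on `(0, R)` with `p > 0`, `m > 0` and
`2Gm < c²r`. -/
def IsTOVSolution (G c : ℝ) (ρ m p : ℝ → ℝ) (R : ENNReal) : Prop :=
  ∀ r ∈ tovDomain R,
    0 < p r ∧ 0 < m r ∧ 2 * G * m r < c ^ 2 * r ∧
    HasDerivAt m (4 * Real.pi * r ^ 2 * ρ (p r)) r ∧
    HasDerivAt p (-(G * m r * ρ (p r) / r ^ 2) * (1 + p r / (ρ (p r) * c ^ 2)) *
      (1 + 4 * Real.pi * r ^ 3 * p r / (m r * c ^ 2)) *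
      (1 - 2 * G * m r / (c ^ 2 * r))⁻¹) r

/-- `ρ` is a barotropic equation of state: continuous on `[0,∞)`, C² and positive on
`(0,∞)`, with `dρ/dp ≥ 0`. -/
def IsBarotropic (ρ : ℝ → ℝ) : Prop :=
  ContinuousOn ρ (Ici 0) ∧ ContDiffOn ℝ 2 ρ (Ioi 0) ∧
  (∀ q ≥ 0, 0 ≤ ρ q) ∧ (∀ q > 0, 0 < ρ q) ∧ (∀ q > 0, 0 ≤ deriv ρ q)

/-- The interval `(0, R)` is maximal: the solution admits no extension to a larger
interval. -/
def IsMaximalTOVSolution (G c : ℝ) (ρ m p : ℝ → ℝ) (R : ENNReal) : Prop :=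
  IsTOVSolution G c ρ m p R ∧
  ∀ (R' : ENNReal) (m' p' : ℝ → ℝ), R < R' → IsTOVSolution G c ρ m' p' R' →
    Set.EqOn m' m (tovDomain R) → ¬ Set.EqOn p' p (tovDomain R)

/-- A regular solution of the TOV system with central pressure `pc > 0`: a maximal
solution with `p(r) → pc` and `m(r)/r³ → (4π/3)ρ(pc)` as `r → 0⁺`. -/
def IsRegularTOVSolution (G c : ℝ) (ρ m p : ℝ → ℝ) (R : ENNReal) (pc : ℝ) : Prop :=
  IsMaximalTOVSolution G c ρ m p R ∧ 0 < pc ∧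
  Filter.Tendsto p (nhdsWithin 0 (Ioi 0)) (nhds pc) ∧
  Filter.Tendsto (fun r => m r / r ^ 3) (nhdsWithin 0 (Ioi 0))
    (nhds (4 * Real.pi / 3 * ρ pc))

/-!
In the dimensionless variables `u = Gm/(c²r)`, `v = 4πGr²p/c⁴` and `q = 4πGr²ρ(p)/c²` the TOV
system reads `r u' = q - u`, `r v' = 2v - (q + v)(u + v)/(1 - 2u)`, and `dρ/dp ≥ 0` makes `ρ(p(r))`
nonincreasing, so the mean density dominates the local one: `q ≤ 3u`. The Buchdahl defect
`F = (3u + v)² - 2(2u + v)` then satisfies `r F' = (q - 3u) W + F K`, where `W > 0` on the curve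
`F = 0`. As `F < 0` near the centre, `F` cannot become positive: to the right of a last zero it
would satisfy `F' ≤ κ F` with `F = 0` initially, and Grönwall's inequality forces `F ≤ 0`.
-/

theorem exists_zero_forall_pos_of_continuousOn {f : ℝ → ℝ} {a b : ℝ} (hab : a ≤ b)
    (hf : ContinuousOn f (Icc a b)) (ha : f a ≤ 0) (hb : 0 < f b) :
    ∃ t ∈ Ico a b, f t = 0 ∧ ∀ y ∈ Ioc t b, 0 < f y := by
  have hS : IsCompact (Icc a b ∩ f ⁻¹' Iic 0) := isCompact_Icc.of_isClosed_subset
    (hf.preimage_isClosed_of_isClosed isClosed_Icc isClosed_Iic) inter_subset_left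
  obtain ⟨t, ⟨htI, hft⟩, hmax⟩ := hS.exists_isGreatest ⟨a, left_mem_Icc.2 hab, ha⟩
  have hpos : ∀ y ∈ Ioc t b, 0 < f y := fun y hy => by
    by_contra! hy'
    exact (hmax ⟨⟨htI.1.trans hy.1.le, hy.2⟩, hy'⟩).not_gt hy.1
  have htb : t < b := htI.2.lt_of_ne fun h => (h ▸ hb).not_ge hft
  refine ⟨t, ⟨htI.1, htb⟩, le_antisymm hft (not_lt.1 fun hneg => ?_), hpos⟩
  obtain ⟨y, hy, hfy⟩ := intermediate_value_Ioo htb.le (hf.mono (Icc_subset_Icc_left htI.1))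
    ⟨hneg, hb⟩
  exact (hpos y ⟨hy.1, hy.2.le⟩).ne' hfy

theorem nonpos_of_hasDerivAt_le_mul_near_zeros {f f' : ℝ → ℝ} {a b : ℝ} (hab : a ≤ b)
    (hf : ∀ x ∈ Icc a b, HasDerivAt f (f' x) x) (ha : f a ≤ 0)
    (hzero : ∀ x ∈ Ico a b, f x = 0 → ∃ κ, ∀ᶠ y in 𝓝[≥] x, 0 ≤ f y → f' y ≤ κ * f y) :
    f b ≤ 0 := by
  have hfc : ContinuousOn f (Icc a b) := fun x hx => (hf x hx).continuousAt.continuousWithinAt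
  by_contra! hb
  obtain ⟨t, ht, hft, hpos⟩ := exists_zero_forall_pos_of_continuousOn hab hfc ha hb
  obtain ⟨κ, hκ⟩ := hzero t ht hft
  obtain ⟨e, hte, he⟩ := mem_nhdsGE_iff_exists_Ico_subset.1 hκ
  set d := min e b
  have htd : t < d := lt_min hte ht.2
  have hsub : Icc t d ⊆ Icc a b := Icc_subset_Icc ht.1 (min_le_right _ _)
  have hnonneg : ∀ y ∈ Icc t d, 0 ≤ f y := fun y hy =>
    hy.1.eq_or_lt.elim (fun h => h ▸ hft.ge) fun h => (hpos y ⟨h, hy.2.trans (min_le_right _ _)⟩).le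
  have hgron := le_gronwallBound_of_liminf_deriv_right_le (f := f) (f' := f') (δ := 0) (K := κ)
    (ε := 0) (hfc.mono hsub)
    (fun x hx _ hr =>
      (hf x (hsub (Ico_subset_Icc_self hx))).hasDerivWithinAt.liminf_right_slope_le hr)
    hft.le (fun x hx => by
      rw [add_zero]
      exact he ⟨hx.1, hx.2.trans_le (min_le_left _ _)⟩ (hnonneg x (Ico_subset_Icc_self hx)))
    d ⟨htd.le, le_rfl⟩
  rw [gronwallBound_ε0_δ0] at hgron
  exact (hpos d ⟨htd, min_le_right _ _⟩).not_ge hgron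

theorem le_of_tendsto_nhdsGT_of_hasDerivAt_nonneg {g g' : ℝ → ℝ} {a b L : ℝ} (hab : a < b)
    (hg : ∀ x ∈ Ioc a b, HasDerivAt g (g' x) x) (hg' : ∀ x ∈ Ioc a b, 0 ≤ g' x)
    (hL : Tendsto g (𝓝[>] a) (𝓝 L)) : L ≤ g b := by
  have hmono : MonotoneOn g (Ioc a b) :=
    monotoneOn_of_hasDerivWithinAt_nonneg (convex_Ioc a b)
      (fun x hx => (hg x hx).continuousAt.continuousWithinAt)
      (fun x hx => (hg x (interior_subset hx)).hasDerivWithinAt)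
      (fun x hx => hg' x (interior_subset hx))
  refine le_of_tendsto hL ?_
  filter_upwards [Ioo_mem_nhdsGT hab] with x hx
  exact hmono ⟨hx.1, hx.2.le⟩ (right_mem_Ioc.2 hab) hx.2.le

theorem div_le_of_tendsto_nhdsLT {f : ℝ → ℝ} {b k M : ℝ} (hb : 0 < b)
    (hf : ∀ r ∈ Ioo 0 b, f r / r ≤ k) (hM : Tendsto f (𝓝[<] b) (𝓝 M)) : M / b ≤ k := by
  refine le_of_tendsto (hM.div (tendsto_nhdsWithin_of_tendsto_nhds tendsto_id) hb.ne') ?_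
  filter_upwards [Ioo_mem_nhdsLT hb] with r hr using hf r hr

noncomputable section

def buchdahlDefect (u v : ℝ) : ℝ := (3 * u + v) ^ 2 - 2 * (2 * u + v)

def buchdahlWeight (u v : ℝ) : ℝ :=
  6 * (3 * u + v) - 4 + 2 * (u + v) * (1 - (3 * u + v)) / (1 - 2 * u)

def buchdahlRate (u v : ℝ) : ℝ := 2 - 2 * (3 * u + v) / (1 - 2 * u)

end

theorem buchdahlDefect_neg {u v : ℝ} (hu : 0 ≤ u) (hv : 0 < v) (huv : u + v < 2 / 9) :
    buchdahlDefect u v < 0 := by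
  unfold buchdahlDefect
  nlinarith [mul_nonneg hu hv.le]

theorem le_four_ninths_of_buchdahlDefect_nonpos {u v : ℝ} (hv : 0 ≤ v)
    (h : buchdahlDefect u v ≤ 0) : u ≤ 4 / 9 := by
  unfold buchdahlDefect at h
  nlinarith [sq_nonneg v]

theorem buchdahlWeight_pos {u v : ℝ} (hu : 0 < u) (hv : 0 < v) (h : buchdahlDefect u v = 0) :
    0 < buchdahlWeight u v := by
  unfold buchdahlDefect at h
  have hs : 4 / 3 < 3 * u + v := by nlinarith
  have hD : 1 - 2 * u = (3 * u + v - 1) ^ 2 := by linear_combination -h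
  have hD0 : 0 < 1 - 2 * u := by rw [hD]; nlinarith
  have key : buchdahlWeight u v * (1 - 2 * u) = 4 * (3 * u + v - 1) ^ 3 := by
    rw [buchdahlWeight, add_mul, div_mul_cancel₀ _ hD0.ne']
    linear_combination (2 - 4 * (3 * u + v)) * h
  have hs1 : 0 < 3 * u + v - 1 := by linarith
  exact pos_of_mul_pos_left (key ▸ by positivity) hD0.le

theorem buchdahlDefect_deriv_eq {u v q : ℝ} (hu : 1 - 2 * u ≠ 0) :
    2 * (3 * u + v) * (3 * (q - u) + (2 * v - (q + v) * (u + v) / (1 - 2 * u))) -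
        2 * (2 * (q - u) + (2 * v - (q + v) * (u + v) / (1 - 2 * u))) =
      (q - 3 * u) * buchdahlWeight u v + buchdahlDefect u v * buchdahlRate u v := by
  unfold buchdahlWeight buchdahlDefect buchdahlRate
  field_simp
  ring

theorem hasDerivAt_buchdahlDefect {u v : ℝ → ℝ} {q x : ℝ}
    (hu : HasDerivAt u ((q - u x) / x) x)
    (hv : HasDerivAt v ((2 * v x - (q + v x) * (u x + v x) / (1 - 2 * u x)) / x) x)
    (h : 1 - 2 * u x ≠ 0) :
    HasDerivAt (fun y => buchdahlDefect (u y) (v y))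
      (((q - 3 * u x) * buchdahlWeight (u x) (v x) +
        buchdahlDefect (u x) (v x) * buchdahlRate (u x) (v x)) / x) x := by
  have := (((hu.const_mul 3).add hv).pow 2).sub (((hu.const_mul 2).add hv).const_mul 2)
  refine this.congr_deriv ?_
  simp only [Pi.add_apply, Nat.cast_ofNat]
  rw [← buchdahlDefect_deriv_eq h]
  ring

theorem buchdahlDefect_nonpos_of_hasDerivAt {u v q : ℝ → ℝ} {b : ℝ} (hb : 0 < b)
    (hu : ∀ x ∈ Ioc 0 b, HasDerivAt u ((q x - u x) / x) x)
    (hv : ∀ x ∈ Ioc 0 b,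
      HasDerivAt v ((2 * v x - (q x + v x) * (u x + v x) / (1 - 2 * u x)) / x) x)
    (hu0 : ∀ x ∈ Ioc 0 b, 0 < u x) (hv0 : ∀ x ∈ Ioc 0 b, 0 < v x)
    (hu1 : ∀ x ∈ Ioc 0 b, 2 * u x < 1) (hq : ∀ x ∈ Ioc 0 b, q x ≤ 3 * u x)
    (hlim : Tendsto (fun x => u x + v x) (𝓝[>] 0) (𝓝 0)) :
    buchdahlDefect (u b) (v b) ≤ 0 := by
  obtain ⟨a, ha_small, ha⟩ : ∃ a, u a + v a < 2 / 9 ∧ a ∈ Ioo 0 b :=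
    ((hlim.eventually (gt_mem_nhds (by norm_num))).and (Ioo_mem_nhdsGT hb)).exists
  have hsub : Icc a b ⊆ Ioc 0 b := fun x hx => ⟨ha.1.trans_le hx.1, hx.2⟩
  have hne : ∀ x ∈ Ioc 0 b, 1 - 2 * u x ≠ 0 := fun x hx => by linarith [hu1 x hx]
  refine nonpos_of_hasDerivAt_le_mul_near_zeros
    (f := fun y => buchdahlDefect (u y) (v y)) ha.2.le
    (fun x hx => hasDerivAt_buchdahlDefect (hu x (hsub hx)) (hv x (hsub hx)) (hne x (hsub hx)))
    (buchdahlDefect_neg (hu0 a (hsub (left_mem_Icc.2 ha.2.le))).le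
      (hv0 a (hsub (left_mem_Icc.2 ha.2.le))) ha_small).le ?_
  intro x hx hFx
  have hx' : x ∈ Ioc 0 b := hsub (Ico_subset_Icc_self hx)
  have hcu := (hu x hx').continuousAt
  have hcv := (hv x hx').continuousAt
  have hux := hne x hx'
  have hx0 := hx'.1.ne'
  have hWc : ContinuousAt (fun y => buchdahlWeight (u y) (v y)) x := by
    unfold buchdahlWeight; fun_prop (disch := assumption)
  have hKc : ContinuousAt (fun y => buchdahlRate (u y) (v y) / y) x := by
    unfold buchdahlRate; fun_prop (disch := assumption)
  refine ⟨buchdahlRate (u x) (v x) / x + 1, ?_⟩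
  filter_upwards [Ico_mem_nhdsGE hx.2,
    nhdsWithin_le_nhds
      (hWc.eventually (lt_mem_nhds (buchdahlWeight_pos (hu0 x hx') (hv0 x hx') hFx))),
    nhdsWithin_le_nhds (hKc.eventually (gt_mem_nhds (lt_add_one _)))] with y hy hWy hKy hFy
  have hy : y ∈ Ioc 0 b := ⟨hx'.1.trans_le hy.1, hy.2.le⟩
  calc ((q y - 3 * u y) * buchdahlWeight (u y) (v y) +
        buchdahlDefect (u y) (v y) * buchdahlRate (u y) (v y)) / y
      = (q y - 3 * u y) * buchdahlWeight (u y) (v y) / y +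
        buchdahlDefect (u y) (v y) * (buchdahlRate (u y) (v y) / y) := by ring
    _ ≤ 0 + buchdahlDefect (u y) (v y) * (buchdahlRate (u x) (v x) / x + 1) := by
      gcongr
      exact div_nonpos_of_nonpos_of_nonneg
        (mul_nonpos_of_nonpos_of_nonneg (sub_nonpos.2 (hq y hy)) hWy.le) hy.1.le
    _ = _ := by ring

theorem IsBarotropic.monotoneOn {ρ : ℝ → ℝ} (hρ : IsBarotropic ρ) : MonotoneOn ρ (Ioi 0) := by
  obtain ⟨-, hC2, -, -, hderiv⟩ := hρ
  refine monotoneOn_of_deriv_nonneg (convex_Ioi 0) hC2.continuousOn ?_ ?_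
  · rw [interior_Ioi]
    exact hC2.differentiableOn (by norm_num)
  · rw [interior_Ioi]
    exact hderiv

theorem Ioc_subset_tovDomain {R : ENNReal} {r : ℝ} (hr : r ∈ tovDomain R) :
    Ioc 0 r ⊆ tovDomain R :=
  fun _ hx => ⟨hx.1, (ENNReal.ofReal_le_ofReal hx.2).trans_lt hr.2⟩

namespace IsTOVSolution

variable {G c : ℝ} {ρ m p : ℝ → ℝ} {R : ENNReal}

theorem pressure_deriv_nonpos (hsol : IsTOVSolution G c ρ m p R) (hG : 0 ≤ G)
    (hρ : ∀ q ≥ 0, 0 ≤ ρ q) {r : ℝ} (hr : r ∈ tovDomain R) :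
    -(G * m r * ρ (p r) / r ^ 2) * (1 + p r / (ρ (p r) * c ^ 2)) *
      (1 + 4 * π * r ^ 3 * p r / (m r * c ^ 2)) * (1 - 2 * G * m r / (c ^ 2 * r))⁻¹ ≤ 0 := by
  obtain ⟨hp, hm, hlt, -, -⟩ := hsol r hr
  have hρp := hρ _ hp.le
  have hr0 := hr.1
  have hcr : 0 < c ^ 2 * r := (mul_nonneg (mul_nonneg zero_le_two hG) hm.le).trans_lt hlt
  have hD : 0 < 1 - 2 * G * m r / (c ^ 2 * r) := by
    rw [sub_pos, div_lt_one hcr]; exact hlt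
  have : 0 ≤ G * m r * ρ (p r) / r ^ 2 * (1 + p r / (ρ (p r) * c ^ 2)) *
      (1 + 4 * π * r ^ 3 * p r / (m r * c ^ 2)) * (1 - 2 * G * m r / (c ^ 2 * r))⁻¹ := by
    positivity
  simpa only [neg_mul, neg_nonpos] using this

theorem antitoneOn_pressure (hsol : IsTOVSolution G c ρ m p R) (hG : 0 ≤ G)
    (hρ : ∀ q ≥ 0, 0 ≤ ρ q) {r : ℝ} (hr : r ∈ tovDomain R) : AntitoneOn p (Ioc 0 r) := by
  have hsub := Ioc_subset_tovDomain hr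
  exact antitoneOn_of_hasDerivWithinAt_nonpos (convex_Ioc 0 r)
    (fun x hx => (hsol x (hsub hx)).2.2.2.2.continuousAt.continuousWithinAt)
    (fun x hx => (hsol x (hsub (interior_subset hx))).2.2.2.2.hasDerivWithinAt)
    (fun x hx => hsol.pressure_deriv_nonpos hG hρ (hsub (interior_subset hx)))

theorem mean_density_le (hsol : IsTOVSolution G c ρ m p R) (hG : 0 ≤ G)
    (hρ : IsBarotropic ρ) (hm0 : Tendsto m (𝓝[>] 0) (𝓝 0)) {r : ℝ} (hr : r ∈ tovDomain R) :
    4 * π / 3 * r ^ 3 * ρ (p r) ≤ m r := by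
  have hsub := Ioc_subset_tovDomain hr
  have hanti := hsol.antitoneOn_pressure hG hρ.2.2.1 hr
  have hcube : Tendsto (fun x : ℝ => 4 * π / 3 * x ^ 3 * ρ (p r)) (𝓝[>] 0) (𝓝 0) := by
    refine tendsto_nhdsWithin_of_tendsto_nhds ?_
    simpa using ((continuous_pow 3).const_mul (4 * π / 3)).mul_const (ρ (p r)) |>.tendsto 0
  have := le_of_tendsto_nhdsGT_of_hasDerivAt_nonneg hr.1
    (g := fun x => m x - 4 * π / 3 * x ^ 3 * ρ (p r))
    (fun x hx => (hsol x (hsub hx)).2.2.2.1.sub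
      (((hasDerivAt_pow 3 x).const_mul (4 * π / 3)).mul_const (ρ (p r))))
    (fun x hx => by
      have hρle : ρ (p r) ≤ ρ (p x) :=
        hρ.monotoneOn (hsol r hr).1 (hsol x (hsub hx)).1 (hanti hx (right_mem_Ioc.2 hr.1) hx.2)
      have := mul_nonneg (by positivity : (0 : ℝ) ≤ 4 * π * x ^ 2) (sub_nonneg.2 hρle)
      norm_num
      linarith)
    (by simpa using hm0.sub hcube)
  linarith

theorem hasDerivAt_compactness (hsol : IsTOVSolution G c ρ m p R) (hc : c ≠ 0) {r : ℝ}
    (hr : r ∈ tovDomain R) :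
    HasDerivAt (fun x => G * m x / (c ^ 2 * x))
      ((4 * π * G * r ^ 2 * ρ (p r) / c ^ 2 - G * m r / (c ^ 2 * r)) / r) r := by
  have hr0 := hr.1.ne'
  refine (((hsol r hr).2.2.2.1.const_mul G).div ((hasDerivAt_id' r).const_mul (c ^ 2))
    (by positivity)).congr_deriv ?_
  field_simp

theorem hasDerivAt_pressureRatio (hsol : IsTOVSolution G c ρ m p R) (hc : c ≠ 0)
    (hρ : ∀ q > 0, 0 < ρ q) {r : ℝ} (hr : r ∈ tovDomain R) :
    HasDerivAt (fun x => 4 * π * G * x ^ 2 * p x / c ^ 4)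
      ((2 * (4 * π * G * r ^ 2 * p r / c ^ 4) -
        (4 * π * G * r ^ 2 * ρ (p r) / c ^ 2 + 4 * π * G * r ^ 2 * p r / c ^ 4) *
          (G * m r / (c ^ 2 * r) + 4 * π * G * r ^ 2 * p r / c ^ 4) /
          (1 - 2 * (G * m r / (c ^ 2 * r)))) / r) r := by
  obtain ⟨hp, hm, hlt, -, hdp⟩ := hsol r hr
  have hr0 := hr.1.ne'
  have hρp := (hρ _ hp).ne'
  have hm0 := hm.ne'
  have hD : c ^ 2 * r - 2 * G * m r ≠ 0 := by linarith
  refine ((((hasDerivAt_pow 2 r).const_mul (4 * π * G)).mul hdp).div_const (c ^ 4)).congr_deriv ?_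
  field_simp
  ring

theorem buchdahlDefect_nonpos (hsol : IsTOVSolution G c ρ m p R) (hG : 0 < G) (hc : 0 < c)
    (hρ : IsBarotropic ρ) {μ pc : ℝ} (hm : Tendsto (fun r => m r / r ^ 3) (𝓝[>] 0) (𝓝 μ))
    (hp : Tendsto p (𝓝[>] 0) (𝓝 pc)) {r : ℝ} (hr : r ∈ tovDomain R) :
    buchdahlDefect (G * m r / (c ^ 2 * r)) (4 * π * G * r ^ 2 * p r / c ^ 4) ≤ 0 := by
  have hsub := Ioc_subset_tovDomain hr
  have hpow : ∀ n : ℕ, n ≠ 0 → Tendsto (fun x : ℝ => x ^ n) (𝓝[>] 0) (𝓝 0) := fun n hn =>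
    tendsto_nhdsWithin_of_tendsto_nhds ((continuous_pow n).tendsto' 0 0 (zero_pow hn))
  have hm0 : Tendsto m (𝓝[>] 0) (𝓝 0) := by
    have := hm.mul (hpow 3 three_ne_zero)
    rw [mul_zero] at this
    refine this.congr' ?_
    filter_upwards [self_mem_nhdsWithin] with x (hx : 0 < x)
    exact div_mul_cancel₀ _ (pow_ne_zero 3 hx.ne')
  have hsmall : Tendsto (fun x => G * m x / (c ^ 2 * x) + 4 * π * G * x ^ 2 * p x / c ^ 4)
      (𝓝[>] 0) (𝓝 0) := by
    have := ((hm.const_mul (G / c ^ 2)).mul (hpow 2 two_ne_zero)).add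
      (((hpow 2 two_ne_zero).const_mul (4 * π * G / c ^ 4)).mul hp)
    simp only [mul_zero, zero_mul, add_zero] at this
    refine this.congr' ?_
    filter_upwards [self_mem_nhdsWithin] with x (hx : 0 < x)
    field_simp
  refine buchdahlDefect_nonpos_of_hasDerivAt
    (q := fun x => 4 * π * G * x ^ 2 * ρ (p x) / c ^ 2) hr.1
    (fun x hx => hsol.hasDerivAt_compactness hc.ne' (hsub hx))
    (fun x hx => hsol.hasDerivAt_pressureRatio hc.ne' hρ.2.2.2.1 (hsub hx))
    (fun x hx => ?_) (fun x hx => ?_) (fun x hx => ?_) (fun x hx => ?_) hsmall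
  all_goals obtain ⟨hpx, hmx, hlt, -, -⟩ := hsol x (hsub hx)
  all_goals have hx0 := hx.1
  · positivity
  · positivity
  · rw [← mul_div_assoc, div_lt_one (by positivity)]
    linarith
  · have hmean := hsol.mean_density_le hG.le hρ hm0 (hsub hx)
    have hdiff : 3 * (G * m x / (c ^ 2 * x)) - 4 * π * G * x ^ 2 * ρ (p x) / c ^ 2 =
        3 * G / (c ^ 2 * x) * (m x - 4 * π / 3 * x ^ 3 * ρ (p x)) := by
      field_simp
    exact sub_nonneg.1 (hdiff ▸ mul_nonneg (by positivity) (sub_nonneg.2 hmean))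

end IsTOVSolution

/-- **Buchdahl inequality.** For a regular TOV solution with
`dρ/dp ≥ 0`, setting `ℳ = Gm/(c²r)` and `𝒫 = 4πGr²p/c⁴`, one has
`(3ℳ + 𝒫)² ≤ 2(2ℳ + 𝒫)` for all `r`; in particular `ℳ ≤ 4/9`, and if the radius `R`
and total mass `M` are finite then `2GM/(c²R) ≤ 8/9`. -/
theorem stmt10
    (G c : ℝ) (hG : 0 < G) (hc : 0 < c)
    (ρ : ℝ → ℝ) (hρ : IsBarotropic ρ)
    (m p : ℝ → ℝ) (R : ENNReal) (pc : ℝ)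
    (hsol : IsRegularTOVSolution G c ρ m p R pc) :
    (∀ r ∈ tovDomain R,
      (3 * (G * m r / (c ^ 2 * r)) + 4 * Real.pi * G * r ^ 2 * p r / c ^ 4) ^ 2 ≤
        2 * (2 * (G * m r / (c ^ 2 * r)) + 4 * Real.pi * G * r ^ 2 * p r / c ^ 4) ∧
      G * m r / (c ^ 2 * r) ≤ 4 / 9) ∧
    (∀ M : ℝ, R ≠ ⊤ →
      Filter.Tendsto m (nhdsWithin R.toReal (Iio R.toReal)) (nhds M) →
      2 * G * M / (c ^ 2 * R.toReal) ≤ 8 / 9) := by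
  obtain ⟨⟨hTOV, -⟩, -, hp, hm⟩ := hsol
  have hdefect r (hr : r ∈ tovDomain R) :=
    hTOV.buchdahlDefect_nonpos hG hc hρ hm hp hr
  have hcompact r (hr : r ∈ tovDomain R) : G * m r / (c ^ 2 * r) ≤ 4 / 9 := by
    have hv : 0 ≤ 4 * π * G * r ^ 2 * p r / c ^ 4 := by
      have := (hTOV r hr).1
      positivity
    exact le_four_ninths_of_buchdahlDefect_nonpos hv (hdefect r hr)
  refine ⟨fun r hr => ⟨sub_nonpos.1 (hdefect r hr), hcompact r hr⟩, fun M hR hM => ?_⟩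
  rcases (ENNReal.toReal_nonneg (a := R)).eq_or_lt with hR0 | hR0
  · rw [← hR0, mul_zero, div_zero]
    norm_num
  have hdom : Ioo 0 R.toReal ⊆ tovDomain R := fun r hr =>
    ⟨hr.1, (ENNReal.ofReal_lt_ofReal_iff hR0).2 hr.2 |>.trans_eq (ENNReal.ofReal_toReal hR)⟩
  rw [← div_div]
  refine div_le_of_tendsto_nhdsLT hR0 (fun r hr => ?_) ((hM.const_mul (2 * G)).div_const _)
  calc 2 * G * m r / c ^ 2 / r = 2 * (G * m r / (c ^ 2 * r)) := by ring
    _ ≤ 8 / 9 := by linarith [hcompact r (hdom hr)]
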